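/- For the Féjer test function φ(x) = (sin(πδx)/(πδx))² with Fourier transform φ̂(y) = δ^{-1} max(1 - |y|/δ, 0), one has ∫_{ℝ} φ(x)·(1 - sin(2πx)/(2πx)) dx = 1/(2δ²) when δ ≥ 1, and ∫_{ℝ} φ(x)·(1 - sin(2πx)/(2πx)) dx = 1/δ - 1/2 when 0 < δ < 1. -/

import Mathlib

open Real MeasureTheory Complex intervalIntegral FourierTransform

noncomputable def tri (δ : ℝ) (y : ℝ) : ℂ := ((δ⁻¹ * max (1 - |y| / δ) 0 : ℝ) : ℂ)

noncomputable def box (y : ℝ) : ℂ := if |y| ≤ 1 then (1 / 2 : ℂ) else 0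

lemma hasDerivAt_aux (c : ℂ) (hc : c ≠ 0) {d : ℝ} (hd : d ≠ 0) (s : ℝ) (v : ℝ) :
    HasDerivAt (fun y : ℝ => (1 + (s : ℂ) * y / d) * Complex.exp (c * y) / c
        - (s : ℂ) * Complex.exp (c * y) / (d * c ^ 2))
      ((1 + (s : ℂ) * v / d) * Complex.exp (c * v)) v := by
  have hid : HasDerivAt (fun y : ℝ => (y : ℂ)) 1 v := (hasDerivAt_id (v : ℂ)).comp_ofReal
  have hlin : HasDerivAt (fun y : ℝ => 1 + (s : ℂ) * y / d) ((s : ℂ) / d) v := by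
    simpa using (((hid.const_mul (s : ℂ)).div_const (d : ℂ)).const_add 1)
  have hexp : HasDerivAt (fun y : ℝ => Complex.exp (c * y)) (Complex.exp (c * v) * c) v := by
    have : HasDerivAt (fun z : ℂ => Complex.exp (c * z)) (Complex.exp (c * v) * c) (v : ℝ) := by
      simpa [mul_comm] using ((hasDerivAt_id (v : ℂ)).const_mul c).cexp
    exact this.comp_ofReal
  have h1 := (hlin.mul hexp).div_const c
  have h2 := (hexp.const_mul ((s : ℂ))).div_const ((d : ℂ) * c ^ 2)
  have h := h1.sub h2
  have hd' : (d : ℂ) ≠ 0 := Complex.ofReal_ne_zero.mpr hd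
  refine h.congr_deriv ?_
  field_simp
  ring

lemma key_piece (c : ℂ) (hc : c ≠ 0) {d : ℝ} (hd : d ≠ 0) (s a b : ℝ) :
    ∫ v in a..b, (1 + (s : ℂ) * v / d) * Complex.exp (c * v)
      = ((1 + (s : ℂ) * b / d) * Complex.exp (c * b) / c - (s : ℂ) * Complex.exp (c * b) / (d * c ^ 2))
        - ((1 + (s : ℂ) * a / d) * Complex.exp (c * a) / c - (s : ℂ) * Complex.exp (c * a) / (d * c ^ 2)) := by
  refine integral_eq_sub_of_hasDerivAt (fun v _ => hasDerivAt_aux c hc hd s v) ?_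
  apply Continuous.intervalIntegrable
  continuity

lemma tri_continuous (δ : ℝ) : Continuous (tri δ) := by
  apply Complex.continuous_ofReal.comp
  fun_prop

lemma tri_eq_zero {δ : ℝ} (hδ : 0 < δ) {y : ℝ} (hy : δ ≤ |y|) : tri δ y = 0 := by
  have : max (1 - |y| / δ) 0 = 0 := max_eq_right (by
    rw [sub_nonpos]
    rw [le_div_iff₀ hδ]
    linarith)
  simp [tri, this]

lemma tri_of_mem {δ : ℝ} (hδ : 0 < δ) {y : ℝ} (hy : |y| ≤ δ) :
    tri δ y = ((δ⁻¹ * (1 - |y| / δ) : ℝ) : ℂ) := by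
  have : max (1 - |y| / δ) 0 = 1 - |y| / δ := max_eq_left (by
    rw [sub_nonneg, div_le_one hδ]; exact hy)
  simp [tri, this]

lemma tri_integrable {δ : ℝ} (hδ : 0 < δ) : Integrable (tri δ) := by
  apply Continuous.integrable_of_hasCompactSupport (tri_continuous δ)
  apply HasCompactSupport.intro (isCompact_Icc (a := -δ) (b := δ))
  intro y hy
  apply tri_eq_zero hδ
  simp only [Set.mem_Icc, not_and_or, not_le] at hy
  rcases hy with h | h
  · rw [abs_of_neg (by linarith)]; linarith
  · rw [abs_of_pos (by linarith)]; linarith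

lemma box_integrable : Integrable box := by
  have : box = fun y => Set.indicator (Set.Icc (-1 : ℝ) 1) (fun _ => (1 / 2 : ℂ)) y := by
    funext y
    simp only [box, Set.indicator, Set.mem_Icc, abs_le]
  rw [this]
  have : IntegrableOn (fun _ : ℝ => (1 / 2 : ℂ)) (Set.Icc (-1 : ℝ) 1) volume :=
    MeasureTheory.integrableOn_const (measure_Icc_lt_top).ne
  exact (integrable_indicator_iff measurableSet_Icc).mpr this

lemma ft_tri {δ : ℝ} (hδ : 0 < δ) {x : ℝ} (hx : x ≠ 0) :
    𝓕 (tri δ) x = ((Real.sin (π * δ * x) / (π * δ * x)) ^ 2 : ℝ) := by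
  have hδ' : (δ : ℝ) ≠ 0 := hδ.ne'
  have hπ : (π : ℝ) ≠ 0 := Real.pi_ne_zero
  set c : ℂ := -2 * (π : ℂ) * (x : ℂ) * Complex.I with hc_def
  have hc : c ≠ 0 := by
    apply mul_ne_zero _ Complex.I_ne_zero
    apply mul_ne_zero (mul_ne_zero (by norm_num) (Complex.ofReal_ne_zero.mpr hπ))
      (Complex.ofReal_ne_zero.mpr hx)
  rw [Real.fourier_real_eq_integral_exp_smul]
  have hint : ∀ v : ℝ, Complex.exp (↑(-2 * π * v * x) * Complex.I) • tri δ v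
      = Complex.exp (c * v) * tri δ v := by
    intro v
    rw [smul_eq_mul]
    congr 2
    push_cast
    ring
  simp only [hint]
  have hsupp : ∀ v : ℝ, v ∉ Set.Icc (-δ) δ → Complex.exp (c * v) * tri δ v = 0 := by
    intro v hv
    rw [tri_eq_zero hδ, mul_zero]
    simp only [Set.mem_Icc, not_and_or, not_le] at hv
    rcases hv with h | h
    · rw [abs_of_neg (by linarith)]; linarith
    · rw [abs_of_pos (by linarith)]; linarith
  rw [← MeasureTheory.setIntegral_eq_integral_of_forall_compl_eq_zero hsupp,
    MeasureTheory.integral_Icc_eq_integral_Ioc,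
    ← intervalIntegral.integral_of_le (by linarith : (-δ : ℝ) ≤ δ)]
  have hcont : Continuous fun v : ℝ => Complex.exp (c * v) * tri δ v :=
    (Complex.continuous_exp.comp (by continuity)).mul (tri_continuous δ)
  rw [← intervalIntegral.integral_add_adjacent_intervals (a := -δ) (b := 0) (c := δ)
      (hcont.intervalIntegrable _ _) (hcont.intervalIntegrable _ _)]
  have hleft : ∫ v in (-δ : ℝ)..0, Complex.exp (c * v) * tri δ v
      = (δ : ℂ)⁻¹ * ∫ v in (-δ : ℝ)..0, (1 + ((1 : ℝ) : ℂ) * v / δ) * Complex.exp (c * v) := by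
    rw [← intervalIntegral.integral_const_mul]
    apply intervalIntegral.integral_congr
    intro v hv
    rw [Set.uIcc_of_le (by linarith : (-δ : ℝ) ≤ 0), Set.mem_Icc] at hv
    show Complex.exp (c * v) * tri δ v = _
    rw [tri_of_mem hδ (by rw [_root_.abs_of_nonpos hv.2]; linarith),
      _root_.abs_of_nonpos hv.2]
    push_cast
    ring
  have hright : ∫ v in (0 : ℝ)..δ, Complex.exp (c * v) * tri δ v
      = (δ : ℂ)⁻¹ * ∫ v in (0 : ℝ)..δ, (1 + ((-1 : ℝ) : ℂ) * v / δ) * Complex.exp (c * v) := by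
    rw [← intervalIntegral.integral_const_mul]
    apply intervalIntegral.integral_congr
    intro v hv
    rw [Set.uIcc_of_le (by linarith : (0 : ℝ) ≤ δ), Set.mem_Icc] at hv
    show Complex.exp (c * v) * tri δ v = _
    rw [tri_of_mem hδ (by rw [_root_.abs_of_nonneg hv.1]; linarith),
      _root_.abs_of_nonneg hv.1]
    push_cast
    ring
  rw [hleft, hright, key_piece c hc hδ' 1, key_piece c hc hδ' (-1)]
  have hθp : c * ((δ : ℝ) : ℂ) = ((-(2 * π * x * δ) : ℝ) : ℂ) * Complex.I := by push_cast; ring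
  have hθm : c * ((-δ : ℝ) : ℂ) = ((-(-(2 * π * x * δ)) : ℝ) : ℂ) * Complex.I := by push_cast; ring
  rw [hθp, hθm, Complex.exp_mul_I, Complex.exp_mul_I,
    ← Complex.ofReal_cos, ← Complex.ofReal_sin, ← Complex.ofReal_cos, ← Complex.ofReal_sin,
    Real.cos_neg, Real.sin_neg]
  have hcos : Real.cos (-(2 * π * x * δ)) = 1 - 2 * Real.sin (π * δ * x) ^ 2 := by
    rw [Real.cos_neg, show (2 * π * x * δ) = 2 * (π * δ * x) by ring, Real.cos_two_mul']
    have := Real.sin_sq_add_cos_sq (π * δ * x)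
    linarith
  rw [hcos]
  simp only [Complex.ofReal_zero, mul_zero, Complex.exp_zero]
  set S := Real.sin (π * δ * x) with hS
  set T := Real.sin (-(2 * π * x * δ)) with hT
  have hxne : ((x : ℝ) : ℂ) ≠ 0 := Complex.ofReal_ne_zero.mpr hx
  have hπne : ((π : ℝ) : ℂ) ≠ 0 := Complex.ofReal_ne_zero.mpr hπ
  have hδne : ((δ : ℝ) : ℂ) ≠ 0 := Complex.ofReal_ne_zero.mpr hδ'
  have hI : (Complex.I : ℂ) ^ 2 = -1 := Complex.I_sq
  push_cast
  field_simp
  ring_nf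
  rw [hc_def]
  linear_combination (-4 * (S:ℂ)^2 * (π:ℂ)^2 * (x:ℂ)^2) * hI

lemma ft_box {x : ℝ} (hx : x ≠ 0) :
    𝓕 box x = ((Real.sin (2 * π * x) / (2 * π * x)) : ℝ) := by
  have hπ : (π : ℝ) ≠ 0 := Real.pi_ne_zero
  set c : ℂ := -2 * (π : ℂ) * (x : ℂ) * Complex.I with hc_def
  have hc : c ≠ 0 := by
    apply mul_ne_zero _ Complex.I_ne_zero
    exact mul_ne_zero (mul_ne_zero (by norm_num) (Complex.ofReal_ne_zero.mpr hπ))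
      (Complex.ofReal_ne_zero.mpr hx)
  rw [Real.fourier_real_eq_integral_exp_smul]
  have hint : ∀ v : ℝ, Complex.exp (↑(-2 * π * v * x) * Complex.I) • box v
      = Complex.exp (c * v) * box v := by
    intro v
    rw [smul_eq_mul]
    congr 2
    push_cast
    ring
  simp only [hint]
  have hsupp : ∀ v : ℝ, v ∉ Set.Icc (-1 : ℝ) 1 → Complex.exp (c * v) * box v = 0 := by
    intro v hv
    have hv' : ¬ |v| ≤ 1 := by
      rw [abs_le]
      simpa [Set.mem_Icc] using hv
    have : box v = 0 := if_neg hv'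
    rw [this, mul_zero]
  rw [← MeasureTheory.setIntegral_eq_integral_of_forall_compl_eq_zero hsupp,
    MeasureTheory.integral_Icc_eq_integral_Ioc,
    ← intervalIntegral.integral_of_le (by norm_num : (-1 : ℝ) ≤ 1)]
  have hcongr : ∫ v in (-1 : ℝ)..1, Complex.exp (c * v) * box v
      = ∫ v in (-1 : ℝ)..1, Complex.exp (c * v) * (1 / 2 : ℂ) := by
    apply intervalIntegral.integral_congr
    intro v hv
    rw [Set.uIcc_of_le (by norm_num : (-1 : ℝ) ≤ 1)] at hv
    show Complex.exp (c * v) * box v = _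
    rw [show box v = 1 / 2 from if_pos (abs_le.mpr ⟨hv.1, hv.2⟩)]
  rw [hcongr]
  have : ∫ v in (-1 : ℝ)..1, Complex.exp (c * v) * (1 / 2 : ℂ)
      = (∫ v in (-1 : ℝ)..1, Complex.exp (c * v)) * (1 / 2 : ℂ) :=
    intervalIntegral.integral_mul_const _ _
  rw [this, integral_exp_mul_complex hc]
  have h1 : c * ((1 : ℝ) : ℂ) = ((-(2 * π * x) : ℝ) : ℂ) * Complex.I := by push_cast; ring
  have hm1 : c * ((-1 : ℝ) : ℂ) = ((-(-(2 * π * x)) : ℝ) : ℂ) * Complex.I := by push_cast; ring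
  rw [h1, hm1, Complex.exp_mul_I, Complex.exp_mul_I,
    ← Complex.ofReal_cos, ← Complex.ofReal_sin, ← Complex.ofReal_cos, ← Complex.ofReal_sin,
    Real.cos_neg, Real.sin_neg]
  have hxne : ((x : ℝ) : ℂ) ≠ 0 := Complex.ofReal_ne_zero.mpr hx
  have hπne : ((π : ℝ) : ℂ) ≠ 0 := Complex.ofReal_ne_zero.mpr hπ
  push_cast
  field_simp
  ring_nf
  rw [hc_def]
  ring

lemma abs_sin_le_abs'_aux {t : ℝ} (h : 0 ≤ t) : |Real.sin t| ≤ |t| := by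
  rw [_root_.abs_of_nonneg h]
  rcases le_total t 1 with h1 | h1
  · rw [_root_.abs_of_nonneg (Real.sin_nonneg_of_nonneg_of_le_pi h (by linarith [Real.pi_gt_three]))]
    exact Real.sin_le h
  · exact le_trans (Real.abs_sin_le_one t) h1

lemma abs_sin_le_abs' (t : ℝ) : |Real.sin t| ≤ |t| := by
  rcases le_total 0 t with h | h
  · exact abs_sin_le_abs'_aux h
  · calc |Real.sin t| = |Real.sin (-t)| := by rw [Real.sin_neg, abs_neg]
      _ ≤ |(-t)| := abs_sin_le_abs'_aux (by linarith)
      _ = |t| := abs_neg t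

lemma sinc_sq_le_one (u : ℝ) : (Real.sin u / u) ^ 2 ≤ 1 := by
  rcases eq_or_ne u 0 with rfl | hu
  · simp
  · rw [div_pow, div_le_one (by positivity)]
    have := abs_sin_le_abs' u
    rw [← _root_.sq_abs (Real.sin u), ← _root_.sq_abs u]
    exact pow_le_pow_left₀ (abs_nonneg _) this 2

lemma sinc_abs_le_one (u : ℝ) : |Real.sin u / u| ≤ 1 := by
  rcases eq_or_ne u 0 with rfl | hu
  · simp
  · rw [abs_div, div_le_one (abs_pos.mpr hu)]
    exact abs_sin_le_abs' u

lemma S_integrable {δ : ℝ} (hδ : 0 < δ) :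
    Integrable (fun x : ℝ => (Real.sin (π * δ * x) / (π * δ * x)) ^ 2) := by
  have hπδ : 0 < π * δ := mul_pos Real.pi_pos hδ
  apply Integrable.mono' ((integrable_inv_one_add_sq).const_mul (2 + 2 / (π * δ) ^ 2))
  · exact (((Real.measurable_sin.comp (measurable_id.const_mul (π * δ))).div
      (measurable_id.const_mul (π * δ))).pow_const 2).aestronglyMeasurable
  · filter_upwards with x
    have hnn : 0 ≤ (Real.sin (π * δ * x) / (π * δ * x)) ^ 2 := sq_nonneg _
    rw [Real.norm_eq_abs, _root_.abs_of_nonneg hnn]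
    have hpos : (0 : ℝ) < 1 + x ^ 2 := by positivity
    rw [← div_eq_mul_inv, le_div_iff₀ hpos]
    rcases le_total (x ^ 2) 1 with h1 | h1
    · have h2 : (Real.sin (π * δ * x) / (π * δ * x)) ^ 2 ≤ 1 := sinc_sq_le_one _
      have h3 : (0 : ℝ) ≤ 2 / (π * δ) ^ 2 := by positivity
      calc (Real.sin (π * δ * x) / (π * δ * x)) ^ 2 * (1 + x ^ 2) ≤ 1 * 2 := by
            apply mul_le_mul h2 (by linarith) (by linarith) zero_le_one
        _ ≤ 2 + 2 / (π * δ) ^ 2 := by linarith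
    · have hx2 : (0 : ℝ) < x ^ 2 := by linarith
      have hxne : x ≠ 0 := by intro h; rw [h] at hx2; simp at hx2
      have hu : π * δ * x ≠ 0 := mul_ne_zero hπδ.ne' hxne
      have h2 : (Real.sin (π * δ * x) / (π * δ * x)) ^ 2 ≤ 1 / (π * δ * x) ^ 2 := by
        rw [div_pow, div_le_div_iff₀ (by positivity) (by positivity)]
        have hb := Real.abs_sin_le_one (π * δ * x)
        have hs : Real.sin (π * δ * x) ^ 2 ≤ 1 := by
          rw [← _root_.sq_abs]
          nlinarith [abs_nonneg (Real.sin (π * δ * x))]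
        nlinarith [sq_nonneg (π * δ * x)]
      calc (Real.sin (π * δ * x) / (π * δ * x)) ^ 2 * (1 + x ^ 2)
          ≤ 1 / (π * δ * x) ^ 2 * (2 * x ^ 2) := by
            apply mul_le_mul h2 (by linarith) (by linarith) (by positivity)
        _ = 2 / (π * δ) ^ 2 := by field_simp
        _ ≤ 2 + 2 / (π * δ) ^ 2 := by linarith

section glue
variable {δ : ℝ}

lemma ae_ne_zero : ∀ᵐ x : ℝ, x ≠ 0 := by
  rw [MeasureTheory.ae_iff]
  simp only [ne_eq, not_not, Set.setOf_eq_eq_singleton]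
  exact Real.volume_singleton

lemma ft_tri_ae (hδ : 0 < δ) : 𝓕 (tri δ) =ᵐ[volume]
    fun x => (((Real.sin (π * δ * x) / (π * δ * x)) ^ 2 : ℝ) : ℂ) :=
  ae_ne_zero.mono fun x hx => ft_tri hδ hx

lemma ft_tri_integrable (hδ : 0 < δ) : Integrable (𝓕 (tri δ)) :=
  ((S_integrable hδ).ofReal (𝕜 := ℂ)).congr (ft_tri_ae hδ).symm

lemma ft_ft_tri (hδ : 0 < δ) (y : ℝ) : 𝓕 (𝓕 (tri δ)) y = tri δ y := by
  have h1 := Continuous.fourierInv_fourier_eq (tri_continuous δ) (tri_integrable hδ)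
    (ft_tri_integrable hδ)
  have h2 := Real.fourierInv_eq_fourier_neg (𝓕 (tri δ)) (-y)
  rw [neg_neg] at h2
  rw [← h2, h1]
  show tri δ (-y) = tri δ y
  simp [tri, abs_neg]

lemma integral_eq_ft_zero (f : ℝ → ℂ) : ∫ v, f v = 𝓕 f 0 := by
  rw [Real.fourier_eq]
  simp

lemma integral_S (hδ : 0 < δ) :
    ∫ x : ℝ, (Real.sin (π * δ * x) / (π * δ * x)) ^ 2 = δ⁻¹ := by
  have h1 : ∫ x, 𝓕 (tri δ) x = tri δ 0 := by
    rw [integral_eq_ft_zero (𝓕 (tri δ)), ft_ft_tri hδ]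
  have h2 : ∫ x, (((Real.sin (π * δ * x) / (π * δ * x)) ^ 2 : ℝ) : ℂ) = ∫ x, 𝓕 (tri δ) x :=
    integral_congr_ae (ft_tri_ae hδ).symm
  rw [h1, show tri δ 0 = ((δ⁻¹ : ℝ) : ℂ) by simp [tri]] at h2
  have h3 := (integral_ofReal (𝕜 := ℂ) (μ := (volume : Measure ℝ))
    (f := fun x => (Real.sin (π * δ * x) / (π * δ * x)) ^ 2)).symm.trans h2
  exact Complex.ofReal_inj.mp h3

lemma mult_formula (hδ : 0 < δ) :
    ∫ ξ : ℝ, 𝓕 (𝓕 (tri δ)) ξ * box ξ = ∫ x : ℝ, 𝓕 (tri δ) x * 𝓕 box x := by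
  have hflip : (innerₗ ℝ).flip = innerₗ ℝ := by
    apply LinearMap.ext; intro x; apply LinearMap.ext; intro y
    exact real_inner_comm x y
  have hL : Continuous fun p : ℝ × ℝ => (innerₗ ℝ) p.1 p.2 := continuous_inner
  have h := VectorFourier.integral_fourierIntegral_smul_eq_flip
    (e := Real.fourierChar) (L := innerₗ ℝ) (μ := volume) (ν := volume)
    Real.continuous_fourierChar hL (ft_tri_integrable hδ) box_integrable
  rw [hflip] at h
  exact h

end glue

lemma lin_int (c1 c2 a b : ℝ) :
    ∫ y in a..b, (c1 + c2 * y) = c1 * (b - a) + c2 * (b ^ 2 - a ^ 2) / 2 := by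
  rw [intervalIntegral.integral_add intervalIntegrable_const
    (intervalIntegrable_id.const_mul c2),
    intervalIntegral.integral_const, intervalIntegral.integral_const_mul, integral_id]
  simp [smul_eq_mul]
  ring

lemma integral_tri_box {δ : ℝ} (hδ : 0 < δ) :
    ∫ y : ℝ, tri δ y * box y
      = ((min δ 1 / δ - (min δ 1) ^ 2 / (2 * δ ^ 2) : ℝ) : ℂ) := by
  set a : ℝ := min δ 1 with ha_def
  have ha : 0 < a := lt_min hδ one_pos
  have haδ : a ≤ δ := min_le_left _ _
  have ha1 : a ≤ 1 := min_le_right _ _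
  set R : ℝ → ℝ := fun y => δ⁻¹ * (1 - |y| / δ) * (1 / 2) with hR_def
  have hptwise : ∀ y : ℝ, tri δ y * box y
      = (((if |y| ≤ a then R y else
          (δ⁻¹ * max (1 - |y| / δ) 0) * (if |y| ≤ 1 then (1/2:ℝ) else 0)) : ℝ) : ℂ) := by
    intro y
    by_cases h : |y| ≤ a
    · rw [if_pos h, tri_of_mem hδ (le_trans h haδ)]
      rw [show box y = (1/2 : ℂ) from if_pos (le_trans h ha1), hR_def]
      push_cast
      ring
    · rw [if_neg h, tri]
      by_cases h1 : |y| ≤ 1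
      · rw [show box y = (1/2 : ℂ) from if_pos h1, if_pos h1]
        push_cast; ring
      · rw [show box y = (0 : ℂ) from if_neg h1, if_neg h1]
        push_cast; ring
  have hsimp : ∀ y : ℝ, (if |y| ≤ a then R y else
      (δ⁻¹ * max (1 - |y| / δ) 0) * (if |y| ≤ 1 then (1/2:ℝ) else 0))
      = Set.indicator (Set.Icc (-a) a) R y := by
    intro y
    by_cases h : |y| ≤ a
    · rw [if_pos h, Set.indicator_of_mem (by rw [Set.mem_Icc]; exact abs_le.mp h)]
    · rw [if_neg h, Set.indicator_of_notMem (by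
        rw [Set.mem_Icc]; exact fun hc => h (abs_le.mpr hc))]
      push_neg at h
      rcases min_cases δ 1 with ⟨hmin, hcase⟩ | ⟨hmin, hcase⟩
      · have : max (1 - |y| / δ) 0 = 0 := max_eq_right (by
          rw [sub_nonpos, le_div_iff₀ hδ, one_mul]
          rw [ha_def, hmin] at h
          linarith)
        rw [this]; ring
      · rw [if_neg (show ¬ |y| ≤ 1 by rw [ha_def, hmin] at h; linarith)]; ring
  simp_rw [hptwise, hsimp]
  have hIR : ∫ y : ℝ, Set.indicator (Set.Icc (-a) a) R y = a / δ - a ^ 2 / (2 * δ ^ 2) := by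
    rw [MeasureTheory.integral_indicator measurableSet_Icc,
      MeasureTheory.integral_Icc_eq_integral_Ioc,
      ← intervalIntegral.integral_of_le (by linarith : -a ≤ a)]
    have hsplit : ∫ y in (-a)..a, R y
        = (∫ y in (-a)..(0:ℝ), R y) + ∫ y in (0:ℝ)..a, R y := by
      rw [intervalIntegral.integral_add_adjacent_intervals] <;>
        · apply Continuous.intervalIntegrable
          fun_prop
    rw [hsplit]
    have hleft : ∫ y in (-a)..(0:ℝ), R y
        = ∫ y in (-a)..(0:ℝ), ((1/(2*δ)) + (1/(2*δ^2)) * y) := by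
      apply intervalIntegral.integral_congr
      intro y hy
      rw [Set.uIcc_of_le (by linarith : -a ≤ (0:ℝ)), Set.mem_Icc] at hy
      rw [hR_def]
      show δ⁻¹ * (1 - |y| / δ) * (1 / 2) = _
      rw [_root_.abs_of_nonpos hy.2]
      field_simp
      ring
    have hright : ∫ y in (0:ℝ)..a, R y
        = ∫ y in (0:ℝ)..a, ((1/(2*δ)) + (-(1/(2*δ^2))) * y) := by
      apply intervalIntegral.integral_congr
      intro y hy
      rw [Set.uIcc_of_le (by linarith : (0:ℝ) ≤ a), Set.mem_Icc] at hy
      rw [hR_def]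
      show δ⁻¹ * (1 - |y| / δ) * (1 / 2) = _
      rw [_root_.abs_of_nonneg hy.1]
      field_simp
      ring
    rw [hleft, hright, lin_int, lin_int]
    field_simp
    ring
  have h3 := (integral_ofReal (𝕜 := ℂ) (μ := (volume : Measure ℝ))
    (f := fun y => Set.indicator (Set.Icc (-a) a) R y))
  exact h3.trans (by rw [hIR]; rfl)

lemma ST_integrable {δ : ℝ} (hδ : 0 < δ) :
    Integrable (fun x : ℝ => (Real.sin (π * δ * x) / (π * δ * x)) ^ 2 *
      (Real.sin (2 * π * x) / (2 * π * x))) := by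
  have hmeas : AEStronglyMeasurable
      (fun x : ℝ => Real.sin (2 * π * x) / (2 * π * x)) volume :=
    ((Real.measurable_sin.comp (measurable_id.const_mul (2 * π))).div
      (measurable_id.const_mul (2 * π))).aestronglyMeasurable
  have h := Integrable.bdd_mul (c := 1) (S_integrable hδ) hmeas
    (Filter.Eventually.of_forall fun x => by rw [Real.norm_eq_abs]; exact sinc_abs_le_one (2 * π * x))
  simpa [mul_comm] using h

lemma integral_ST {δ : ℝ} (hδ : 0 < δ) :
    ∫ x : ℝ, (Real.sin (π * δ * x) / (π * δ * x)) ^ 2 *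
        (Real.sin (2 * π * x) / (2 * π * x))
      = min δ 1 / δ - (min δ 1) ^ 2 / (2 * δ ^ 2) := by
  have h1 := mult_formula hδ
  have h2 : ∫ ξ : ℝ, 𝓕 (𝓕 (tri δ)) ξ * box ξ = ∫ y : ℝ, tri δ y * box y := by
    simp only [ft_ft_tri hδ]
  have h3 : ∫ x : ℝ, 𝓕 (tri δ) x * 𝓕 box x
      = ∫ x : ℝ, (((Real.sin (π * δ * x) / (π * δ * x)) ^ 2 *
          (Real.sin (2 * π * x) / (2 * π * x)) : ℝ) : ℂ) := by
    apply MeasureTheory.integral_congr_ae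
    filter_upwards [ae_ne_zero] with x hx
    rw [ft_tri hδ hx, ft_box hx]
    push_cast
    ring
  have h4 := (h2.symm.trans h1).trans h3
  rw [integral_tri_box hδ] at h4
  have h5 := (integral_ofReal (𝕜 := ℂ) (μ := (volume : Measure ℝ))
    (f := fun x => (Real.sin (π * δ * x) / (π * δ * x)) ^ 2 *
      (Real.sin (2 * π * x) / (2 * π * x)))).symm.trans h4.symm
  exact Complex.ofReal_inj.mp h5

theorem fejer_Sp (δ : ℝ) (hδ : 0 < δ) :
    (1 ≤ δ →
      (∫ x : ℝ, (Real.sin (Real.pi * δ * x) / (Real.pi * δ * x)) ^ 2 *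
          (1 - Real.sin (2 * Real.pi * x) / (2 * Real.pi * x))) = 1 / (2 * δ ^ 2)) ∧
    (δ < 1 →
      (∫ x : ℝ, (Real.sin (Real.pi * δ * x) / (Real.pi * δ * x)) ^ 2 *
          (1 - Real.sin (2 * Real.pi * x) / (2 * Real.pi * x))) = 1 / δ - 1 / 2) := by
  have key : (∫ x : ℝ, (Real.sin (π * δ * x) / (π * δ * x)) ^ 2 *
      (1 - Real.sin (2 * π * x) / (2 * π * x)))
      = δ⁻¹ - (min δ 1 / δ - (min δ 1) ^ 2 / (2 * δ ^ 2)) := by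
    have : (fun x : ℝ => (Real.sin (π * δ * x) / (π * δ * x)) ^ 2 *
        (1 - Real.sin (2 * π * x) / (2 * π * x)))
        = fun x : ℝ => (Real.sin (π * δ * x) / (π * δ * x)) ^ 2 -
          (Real.sin (π * δ * x) / (π * δ * x)) ^ 2 *
            (Real.sin (2 * π * x) / (2 * π * x)) := by
      funext x; ring
    rw [this, MeasureTheory.integral_sub (S_integrable hδ) (ST_integrable hδ),
      integral_S hδ, integral_ST hδ]
  constructor
  · intro h
    rw [key, min_eq_right h]
    have hδ' : δ ≠ 0 := hδ.ne'
    field_simp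
    ring
  · intro h
    rw [key, min_eq_left h.le]
    have hδ' : δ ≠ 0 := hδ.ne'
    field_simp
    ring
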